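/- Let B be a bialgebra over a commutative ring R whose underlying algebra is not commutative. Then on the cowarped skew monoidal category R-Mod[B] (tensor X⋆Y = X⊗B⊗Y), the natural isomorphisms X⊗B⊗Y⊗B⊗Z ≅ X⊗B⊗Z⊗B⊗Y induced by the symmetry of R-Mod swapping the factors B⊗Y and B⊗Z satisfy axioms (S2), (S3a), (S3b) and the symmetry axiom, but satisfy axiom (S*) if and only if B is commutative. In particular axiom (S*) is independent of the other braiding axioms. -/

import Mathlib

/-!
On pure tensors `x ⊗ b ⊗ a ⊗ c ⊗ y ⊗ d ⊗ z` the swap only permutes the blocks `B ⊗ A`, `B ⊗ Y`,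
`B ⊗ Z`, while the associator multiplies the first `B`-entry by the first Sweedler leg of the
next one. Hence (S2) and the symmetry axiom hold on the nose, and in (S3a), (S3b) the
associator acts on the same blocks on both sides. In (S*) the two sides become
`∑ x ⊗ b c₁ d₁ ⊗ …` and `∑ x ⊗ b d₁ c₁ ⊗ …` with identical remaining legs, so they agree when
`B` is commutative; conversely, taking all objects to be the unit and contracting the remaining
legs `c₂`, `d₂` with the counit turns (S*) into `c d = d c`.
-/

open CategoryTheory MonoidalCategory TensorProduct

universe u

namespace ModRB

variable (R : Type u) [CommRing R] (B : Type u) [Ring B] [Bialgebra R B]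

/-- `B` as an object of `R-Mod`. -/
noncomputable abbrev Bc : ModuleCat R := ModuleCat.of R B

/-- Comultiplication of `B` as a morphism of `R-Mod`. -/
noncomputable def comulH : Bc R B ⟶ Bc R B ⊗ Bc R B :=
  ModuleCat.ofHom (Coalgebra.comul (R := R) (A := B))

/-- Multiplication of `B` as a morphism of `R-Mod`. -/
noncomputable def mulH : Bc R B ⊗ Bc R B ⟶ Bc R B :=
  ModuleCat.ofHom (LinearMap.mul' R B)

/-- Counit of `B` as a morphism of `R-Mod`. -/
noncomputable def counitH : Bc R B ⟶ 𝟙_ (ModuleCat R) :=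
  ModuleCat.ofHom (Coalgebra.counit (R := R) (A := B))

/-- Unit of `B` as a morphism of `R-Mod`. -/
noncomputable def unitH : 𝟙_ (ModuleCat R) ⟶ Bc R B :=
  ModuleCat.ofHom (Algebra.linearMap R B)

/-- The tensor product `X ⋆ Y = X ⊗ B ⊗ Y` of the skew monoidal category
`R-Mod[B]`. -/
noncomputable def star (X Y : ModuleCat R) : ModuleCat R := X ⊗ (Bc R B ⊗ Y)

/-- The action of `⋆` on morphisms. -/
noncomputable def starHom {X X' Y Y' : ModuleCat R} (f : X ⟶ X') (g : Y ⟶ Y') :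
    star R B X Y ⟶ star R B X' Y' := f ⊗ₘ (Bc R B ◁ g)

/-- The cofree comodule structure `B ⊗ X ⟶ B ⊗ (B ⊗ X)`. -/
noncomputable def δH (X : ModuleCat R) :
    Bc R B ⊗ X ⟶ Bc R B ⊗ (Bc R B ⊗ X) :=
  (comulH R B ▷ X) ≫ (α_ (Bc R B) (Bc R B) X).hom

/-- The lax monoidal structure `G₂ : (B⊗X) ⊗ (B⊗Y) ⟶ B ⊗ (X⊗Y)` of the
monoidal comonad `B ⊗ −`, given by the middle swap followed by
multiplication. -/
noncomputable def G2 (X Y : ModuleCat R) :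
    (Bc R B ⊗ X) ⊗ (Bc R B ⊗ Y) ⟶ Bc R B ⊗ (X ⊗ Y) :=
  (α_ (Bc R B) X (Bc R B ⊗ Y)).hom ≫
    (Bc R B ◁ ((α_ X (Bc R B) Y).inv ≫ ((β_ X (Bc R B)).hom ▷ Y) ≫
      (α_ (Bc R B) X Y).hom)) ≫
    (α_ (Bc R B) (Bc R B) (X ⊗ Y)).inv ≫ (mulH R B ▷ (X ⊗ Y))

/-- The cowarping map `v = G₂ ∘ (1 ⊗ δ)`. -/
noncomputable def vH (X Y : ModuleCat R) :
    (Bc R B ⊗ X) ⊗ (Bc R B ⊗ Y) ⟶ Bc R B ⊗ (X ⊗ (Bc R B ⊗ Y)) :=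
  ((Bc R B ⊗ X) ◁ δH R B Y) ≫ G2 R B X (Bc R B ⊗ Y)

/-- The associator of `R-Mod[B]`. -/
noncomputable def sAssoc (X Y Z : ModuleCat R) :
    star R B (star R B X Y) Z ⟶ star R B X (star R B Y Z) :=
  (α_ X (Bc R B ⊗ Y) (Bc R B ⊗ Z)).hom ≫ (X ◁ vH R B Y Z)

/-- The left unit of `R-Mod[B]`. -/
noncomputable def sL (X : ModuleCat R) : star R B (𝟙_ (ModuleCat R)) X ⟶ X :=
  (λ_ (Bc R B ⊗ X)).hom ≫ (counitH R B ▷ X) ≫ (λ_ X).hom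

/-- The right unit of `R-Mod[B]`. -/
noncomputable def sR (X : ModuleCat R) : X ⟶ star R B X (𝟙_ (ModuleCat R)) :=
  (ρ_ X).inv ≫ (X ◁ ((λ_ (𝟙_ (ModuleCat R))).inv ≫ (unitH R B ▷ 𝟙_ (ModuleCat R))))

section Axioms

variable {R B}
variable (s : ∀ X A Y : ModuleCat R, star R B (star R B X A) Y ⟶ star R B (star R B X Y) A)

/-- Naturality of a family `s : (X⋆A)⋆Y ⟶ (X⋆Y)⋆A`. -/
def SNat : Prop :=
  ∀ {X X' A A' Y Y' : ModuleCat R} (f : X ⟶ X') (g : A ⟶ A') (h : Y ⟶ Y'),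
    starHom R B (starHom R B f g) h ≫ s X' A' Y' =
      s X A Y ≫ starHom R B (starHom R B f h) g

/-- Axiom (S2) for `R-Mod[B]`. -/
def S2 : Prop :=
  ∀ X A Y Z : ModuleCat R,
    s (star R B X A) Y Z ≫ starHom R B (s X A Z) (𝟙 Y) ≫ s (star R B X Z) A Y =
      starHom R B (s X A Y) (𝟙 Z) ≫ s (star R B X Y) A Z ≫
        starHom R B (s X Y Z) (𝟙 A)

/-- Axiom (S3a) for `R-Mod[B]`. -/
def S3a : Prop :=
  ∀ X A Y Z : ModuleCat R,
    starHom R B (s X A Y) (𝟙 Z) ≫ s (star R B X Y) A Z ≫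
        starHom R B (sAssoc R B X Y Z) (𝟙 A) =
      sAssoc R B (star R B X A) Y Z ≫ s X A (star R B Y Z)

/-- Axiom (S3b) for `R-Mod[B]`. -/
def S3b : Prop :=
  ∀ X A Y Z : ModuleCat R,
    s (star R B X A) Y Z ≫ starHom R B (s X A Z) (𝟙 Y) ≫
        sAssoc R B (star R B X Z) A Y =
      starHom R B (sAssoc R B X A Y) (𝟙 Z) ≫ s X (star R B A Y) Z

/-- Axiom (S*) for `R-Mod[B]`. -/
def Sstar : Prop :=
  ∀ X A Y Z : ModuleCat R,
    starHom R B (sAssoc R B X A Y) (𝟙 Z) ≫ sAssoc R B X (star R B A Y) Z ≫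
        starHom R B (𝟙 X) (s A Y Z) =
      s (star R B X A) Y Z ≫ starHom R B (sAssoc R B X A Z) (𝟙 Y) ≫
        sAssoc R B X (star R B A Z) Y

/-- The symmetry axiom for `R-Mod[B]`. -/
def Symm : Prop :=
  ∀ X A Y : ModuleCat R, s X A Y ≫ s X Y A = 𝟙 (star R B (star R B X A) Y)

end Axioms

variable {R B} in
/-- A braiding on the skew monoidal category `R-Mod[B]`. -/
structure SkewBraiding where
  s : ∀ X A Y : ModuleCat R, star R B (star R B X A) Y ⟶ star R B (star R B X Y) A
  iso : ∀ X A Y : ModuleCat R, IsIso (s X A Y)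
  natural : SNat (B := B) s
  ax2 : S2 (B := B) s
  ax3a : S3a (B := B) s
  ax3b : S3b (B := B) s
  axstar : Sstar (B := B) s

/-- Comultiplication on `B ⊗[R] B`. -/
noncomputable def comul₂ : B ⊗[R] B →ₗ[R] (B ⊗[R] B) ⊗[R] (B ⊗[R] B) :=
  Coalgebra.comul

/-- Convolution product of linear forms on the coalgebra `B ⊗[R] B`. -/
noncomputable def conv (f g : B ⊗[R] B →ₗ[R] R) : B ⊗[R] B →ₗ[R] R :=
  LinearMap.mul' R R ∘ₗ TensorProduct.map f g ∘ₗ comul₂ R B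

variable {R B} in
/-- A cobraiding (coquasitriangular structure) on the bialgebra `B`:
a convolution-invertible linear form `γ : B ⊗ B → R` intertwining the
multiplication and the opposite multiplication, and satisfying the two
hexagon-type conditions. -/
structure Cobraiding where
  γ : B ⊗[R] B →ₗ[R] R
  conv_inv : ∃ γ' : B ⊗[R] B →ₗ[R] R,
    conv R B γ γ' = Coalgebra.counit ∧ conv R B γ' γ = Coalgebra.counit
  mul_compat :
    (TensorProduct.lid R B).toLinearMap ∘ₗ
        TensorProduct.map γ (LinearMap.mul' R B) ∘ₗ comul₂ R B =
      (TensorProduct.rid R B).toLinearMap ∘ₗ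
        TensorProduct.map
          (LinearMap.mul' R B ∘ₗ (TensorProduct.comm R B B).toLinearMap) γ ∘ₗ
        comul₂ R B
  hex_left :
    γ ∘ₗ TensorProduct.map (LinearMap.mul' R B) LinearMap.id =
      LinearMap.mul' R R ∘ₗ TensorProduct.map γ γ ∘ₗ
        (TensorProduct.tensorTensorTensorComm R B B B B).toLinearMap ∘ₗ
        TensorProduct.map LinearMap.id (Coalgebra.comul (R := R) (A := B))
  hex_right :
    γ ∘ₗ TensorProduct.map LinearMap.id (LinearMap.mul' R B) =
      LinearMap.mul' R R ∘ₗ TensorProduct.map γ γ ∘ₗ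
        (TensorProduct.tensorTensorTensorComm R B B B B).toLinearMap ∘ₗ
        TensorProduct.map (Coalgebra.comul (R := R) (A := B))
          (TensorProduct.comm R B B).toLinearMap

end ModRB

namespace ModRB

variable (R : Type u) [CommRing R] (B : Type u) [Ring B] [Bialgebra R B]

/-- The candidate braiding on `R-Mod[B]` induced by the symmetry of `R-Mod`
swapping the factors `B ⊗ A` and `B ⊗ Y`. -/
noncomputable def swapS (X A Y : ModuleCat R) :
    star R B (star R B X A) Y ⟶ star R B (star R B X Y) A :=
  (α_ X (Bc R B ⊗ A) (Bc R B ⊗ Y)).hom ≫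
    (X ◁ (β_ (Bc R B ⊗ A) (Bc R B ⊗ Y)).hom) ≫
    (α_ X (Bc R B ⊗ Y) (Bc R B ⊗ A)).inv

end ModRB

open Coalgebra (Repr counit comul)
open scoped Coalgebra

namespace Coalgebra.Repr

variable {R A : Type*} [CommSemiring R]

lemma sum_counit_right_smul [AddCommMonoid A] [Module R A] [Coalgebra R A] {a : A} {ι : Type*}
    (𝓡 : Repr R a ι) : ∑ i ∈ 𝓡.index, counit (R := R) (𝓡.right i) • 𝓡.left i = a := by
  simpa only [map_sum, _root_.TensorProduct.rid_tmul, one_smul]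
    using congrArg (_root_.TensorProduct.rid R A) (sum_tmul_counit_eq 𝓡)

lemma sum_sum_counit_smul_mul [Semiring A] [Algebra R A] [Coalgebra R A] {c d : A}
    {ι κ : Type*} (𝓒 : Repr R c ι) (𝓓 : Repr R d κ) :
    ∑ i ∈ 𝓒.index, ∑ j ∈ 𝓓.index,
      (counit (R := R) (𝓒.right i) * counit (R := R) (𝓓.right j)) • (𝓒.left i * 𝓓.left j) =
      c * d := by
  simp only [← smul_mul_smul_comm, ← Finset.sum_mul_sum, 𝓒.sum_counit_right_smul,
    𝓓.sum_counit_right_smul]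

end Coalgebra.Repr

namespace ModRB

variable {R : Type u} [CommRing R] {B : Type u} [Ring B] [Bialgebra R B]

noncomputable def starTmul {X Y : ModuleCat R} (x : X) (b : B) (y : Y) : star R B X Y :=
  x ⊗ₜ (b ⊗ₜ y)

lemma starTmul_sum_left {X Y : ModuleCat R} {ι : Type*} (s : Finset ι) (x : ι → X) (b : B)
    (y : Y) : starTmul (∑ i ∈ s, x i) b y = ∑ i ∈ s, starTmul (x i) b y :=
  map_sum ((TensorProduct.mk R X (Bc R B ⊗ Y : ModuleCat R)).flip (b ⊗ₜ y)) x s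

lemma star_star_hom_ext {X A Y W : ModuleCat R} {f g : star R B (star R B X A) Y ⟶ W}
    (h : ∀ (x : X) (b : B) (a : A) (c : B) (y : Y),
      f (starTmul (starTmul x b a) c y) = g (starTmul (starTmul x b a) c y)) : f = g :=
  ModuleCat.hom_ext <| TensorProduct.ext <| TensorProduct.ext <| LinearMap.ext fun x =>
    TensorProduct.ext <| LinearMap.ext₂ fun b a => TensorProduct.ext' fun c y => h x b a c y

lemma star_star_star_hom_ext {X A Y Z W : ModuleCat R}
    {f g : star R B (star R B (star R B X A) Y) Z ⟶ W}
    (h : ∀ (x : X) (b : B) (a : A) (c : B) (y : Y) (d : B) (z : Z),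
      f (starTmul (starTmul (starTmul x b a) c y) d z) =
        g (starTmul (starTmul (starTmul x b a) c y) d z)) : f = g :=
  ModuleCat.hom_ext <| TensorProduct.ext <| TensorProduct.ext <| TensorProduct.ext <|
    LinearMap.ext fun x => TensorProduct.ext <| LinearMap.ext₂ fun b a =>
      TensorProduct.ext <| LinearMap.ext₂ fun c y => TensorProduct.ext' fun d z =>
        h x b a c y d z

@[simp] lemma starHom_starTmul {X X' Y Y' : ModuleCat R} (f : X ⟶ X') (g : Y ⟶ Y')
    (x : X) (b : B) (y : Y) : starHom R B f g (starTmul x b y) = starTmul (f x) b (g y) := rfl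

@[simp] lemma swapS_starTmul {X A Y : ModuleCat R} (x : X) (b : B) (a : A) (c : B) (y : Y) :
    swapS R B X A Y (starTmul (starTmul x b a) c y) = starTmul (starTmul x c y) b a := rfl

lemma sAssoc_starTmul {X Y Z : ModuleCat R} (x : X) (b : B) (y : Y) (c : B) (z : Z)
    {ι : Type*} (𝓒 : Repr R c ι) :
    sAssoc R B X Y Z (starTmul (starTmul x b y) c z) =
      ∑ i ∈ 𝓒.index, starTmul x (b * 𝓒.left i) (starTmul y (𝓒.right i) z) := by
  change (TensorProduct.mk R X (Bc R B ⊗ star R B Y Z : ModuleCat R) x ∘ₗ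
    (G2 R B Y (Bc R B ⊗ Z)).hom ∘ₗ
    TensorProduct.mk R (Bc R B ⊗ Y : ModuleCat R) (Bc R B ⊗ (Bc R B ⊗ Z) : ModuleCat R)
      (b ⊗ₜ y) ∘ₗ
    (α_ (Bc R B) (Bc R B) Z).hom.hom ∘ₗ
    (TensorProduct.mk R (Bc R B ⊗ Bc R B : ModuleCat R) Z).flip z) (comul c) = _
  rw [← 𝓒.eq, map_sum]
  rfl

lemma sstar_lhs_starTmul {X A Y Z : ModuleCat R} (x : X) (b : B) (a : A) (c : B) (y : Y)
    (d : B) (z : Z) {ι κ : Type*} (𝓒 : Repr R c ι) (𝓓 : Repr R d κ) :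
    (starHom R B (sAssoc R B X A Y) (𝟙 Z) ≫ sAssoc R B X (star R B A Y) Z ≫
        starHom R B (𝟙 X) (swapS R B A Y Z)) (starTmul (starTmul (starTmul x b a) c y) d z) =
      ∑ i ∈ 𝓒.index, ∑ j ∈ 𝓓.index, starTmul x (b * 𝓒.left i * 𝓓.left j)
        (starTmul (starTmul a (𝓓.right j) z) (𝓒.right i) y) := by
  simp only [ConcreteCategory.comp_apply, starHom_starTmul, ModuleCat.id_apply,
    sAssoc_starTmul _ _ _ _ _ 𝓒, starTmul_sum_left, map_sum, sAssoc_starTmul _ _ _ _ _ 𝓓,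
    swapS_starTmul]

lemma sstar_rhs_starTmul {X A Y Z : ModuleCat R} (x : X) (b : B) (a : A) (c : B) (y : Y)
    (d : B) (z : Z) {ι κ : Type*} (𝓒 : Repr R c ι) (𝓓 : Repr R d κ) :
    (swapS R B (star R B X A) Y Z ≫ starHom R B (sAssoc R B X A Z) (𝟙 Y) ≫
        sAssoc R B X (star R B A Z) Y) (starTmul (starTmul (starTmul x b a) c y) d z) =
      ∑ i ∈ 𝓒.index, ∑ j ∈ 𝓓.index, starTmul x (b * 𝓓.left j * 𝓒.left i)
        (starTmul (starTmul a (𝓓.right j) z) (𝓒.right i) y) := by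
  simp only [ConcreteCategory.comp_apply, starHom_starTmul, ModuleCat.id_apply,
    sAssoc_starTmul _ _ _ _ _ 𝓓, starTmul_sum_left, map_sum, sAssoc_starTmul _ _ _ _ _ 𝓒,
    swapS_starTmul]
  exact Finset.sum_comm

theorem swapS_s2 : S2 (swapS R B) :=
  fun _ _ _ _ => star_star_star_hom_ext fun _ _ _ _ _ _ _ => rfl

theorem swapS_s3a : S3a (swapS R B) := by
  intro X A Y Z
  refine star_star_star_hom_ext fun x b a c y d z => ?_
  simp only [ConcreteCategory.comp_apply, starHom_starTmul, swapS_starTmul, ModuleCat.id_apply,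
    sAssoc_starTmul _ _ _ _ _ (ℛ R d), starTmul_sum_left, map_sum]

theorem swapS_s3b : S3b (swapS R B) := by
  intro X A Y Z
  refine star_star_star_hom_ext fun x b a c y d z => ?_
  simp only [ConcreteCategory.comp_apply, starHom_starTmul, swapS_starTmul, ModuleCat.id_apply,
    sAssoc_starTmul _ _ _ _ _ (ℛ R c), starTmul_sum_left, map_sum]

theorem swapS_symm : Symm (swapS R B) :=
  fun _ _ _ => star_star_hom_ext fun _ _ _ _ _ => rfl

theorem swapS_sstar_of_comm (h : ∀ a b : B, a * b = b * a) : Sstar (swapS R B) := by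
  intro X A Y Z
  refine star_star_star_hom_ext fun x b a c y d z => ?_
  rw [sstar_lhs_starTmul _ _ _ _ _ _ _ (ℛ R c) (ℛ R d),
    sstar_rhs_starTmul _ _ _ _ _ _ _ (ℛ R c) (ℛ R d)]
  refine Finset.sum_congr rfl fun i _ => Finset.sum_congr rfl fun j _ => ?_
  rw [mul_assoc, mul_assoc, h ((ℛ R c).left i)]

noncomputable def counitContraction :
    R ⊗[R] (B ⊗[R] ((R ⊗[R] (B ⊗[R] R)) ⊗[R] (B ⊗[R] R))) →ₗ[R] B :=
  let ε₁ : B ⊗[R] R →ₗ[R] R :=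
    (TensorProduct.lid R R).toLinearMap ∘ₗ (counit (R := R) (A := B)).rTensor R
  (TensorProduct.lid R B).toLinearMap ∘ₗ
    LinearMap.lTensor R ((TensorProduct.rid R B).toLinearMap ∘ₗ LinearMap.lTensor B
      (LinearMap.mul' R R ∘ₗ
        TensorProduct.map ((TensorProduct.lid R R).toLinearMap ∘ₗ ε₁.lTensor R) ε₁))

lemma counitContraction_tmul (r : R) (e : B) (s : R) (f : B) (t : R) (g : B) (u : R) :
    counitContraction (r ⊗ₜ[R] (e ⊗ₜ[R] ((s ⊗ₜ[R] (f ⊗ₜ[R] t)) ⊗ₜ[R] (g ⊗ₜ[R] u)))) =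
      (r * s * t * u * (counit (R := R) g * counit (R := R) f)) • e := by
  simp only [counitContraction, LinearMap.comp_apply, LinearMap.lTensor_tmul,
    LinearMap.rTensor_tmul, TensorProduct.map_tmul, LinearEquiv.coe_coe, TensorProduct.lid_tmul,
    TensorProduct.rid_tmul, LinearMap.mul'_apply, smul_eq_mul, smul_smul]
  ring_nf

-- `counitContraction` as a morphism out of `star`, so that `map_sum` applies to sums of
-- `starTmul`s without unfolding `star`.
noncomputable def contractCounits :
    star R B (𝟙_ (ModuleCat R)) (star R B (star R B (𝟙_ _) (𝟙_ _)) (𝟙_ _)) ⟶ Bc R B :=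
  ModuleCat.ofHom counitContraction

lemma contractCounits_starTmul (r s t u : 𝟙_ (ModuleCat R)) (e f g : B) :
    contractCounits (starTmul r e (starTmul (starTmul s f t) g u)) =
      (r * s * t * u * (counit (R := R) g * counit (R := R) f)) • e :=
  counitContraction_tmul r e s f t g u

theorem comm_of_swapS_sstar (h : Sstar (swapS R B)) (c d : B) : c * d = d * c := by
  have hS := ConcreteCategory.congr_hom (h (𝟙_ _) (𝟙_ _) (𝟙_ _) (𝟙_ _))
    (starTmul (starTmul (starTmul (1 : 𝟙_ (ModuleCat R)) (1 : B) (1 : 𝟙_ (ModuleCat R))) c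
      (1 : 𝟙_ (ModuleCat R))) d (1 : 𝟙_ (ModuleCat R)))
  rw [sstar_lhs_starTmul _ _ _ _ _ _ _ (ℛ R c) (ℛ R d),
    sstar_rhs_starTmul _ _ _ _ _ _ _ (ℛ R c) (ℛ R d)] at hS
  have hC := congrArg contractCounits hS
  simp only [map_sum] at hC
  refine ((?_ : _ = c * d).symm.trans hC).trans ?_
  · refine (Finset.sum_congr rfl fun i _ => Finset.sum_congr rfl fun j _ =>
      contractCounits_starTmul _ _ _ _ _ _ _).trans ?_
    simpa only [one_mul] using (ℛ R c).sum_sum_counit_smul_mul (ℛ R d)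
  · refine (Finset.sum_congr rfl fun i _ => Finset.sum_congr rfl fun j _ =>
      contractCounits_starTmul _ _ _ _ _ _ _).trans ?_
    rw [Finset.sum_comm]
    simpa only [one_mul, mul_comm] using (ℛ R d).sum_sum_counit_smul_mul (ℛ R c)

theorem swapS_sstar_iff : Sstar (swapS R B) ↔ ∀ a b : B, a * b = b * a :=
  ⟨comm_of_swapS_sstar, swapS_sstar_of_comm⟩

end ModRB

open ModRB in
/-- Remark 4.5: for a bialgebra `B` over `R` whose underlying
algebra is not commutative, the natural isomorphisms of `R-Mod[B]` induced by
the symmetry of `R-Mod` swapping `B ⊗ A` and `B ⊗ Y` satisfy (S2), (S3a),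
(S3b) and the symmetry axiom, while they satisfy (S*) if and only if `B` is
commutative — so in particular (S*) fails, exhibiting its independence from
the other braiding axioms. -/
theorem stmt17 (R : Type u) [CommRing R] (B : Type u) [Ring B] [Bialgebra R B]
    (hnc : ¬ ∀ a b : B, a * b = b * a) :
    S2 (R := R) (B := B) (swapS R B) ∧
    S3a (R := R) (B := B) (swapS R B) ∧
    S3b (R := R) (B := B) (swapS R B) ∧
    Symm (R := R) (B := B) (swapS R B) ∧
    (Sstar (R := R) (B := B) (swapS R B) ↔ ∀ a b : B, a * b = b * a) ∧
    ¬ Sstar (R := R) (B := B) (swapS R B) :=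
  ⟨swapS_s2, swapS_s3a, swapS_s3b, swapS_symm, swapS_sstar_iff,
    fun h => hnc (swapS_sstar_iff.mp h)⟩
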